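/- Let M be a map with flag set F and generators s0, s1, s2, and let r0, r1, r2 be the truncation generators on F × {0,1,2}. Suppose M is a k-orbit map and Tr(M) is either a k-orbit or a (3k/2)-orbit map (i.e. Γ(Tr(M)) has fewer than 3k orbits on F × {0,1,2}). Then there is a partition of F into two nonempty sets A and B such that s0(A) = A, s1(A) = A and s2(A) = B; that is, the flag graph of M admits a quotient isomorphic to the symmetry type graph 2_{01}. -/

import Mathlib

/-!
Let `N` be the subgroup of `Mon(M)` generated by `s0`, `s1` and their conjugates by `s2`. Since
`s2` normalises `N`, it maps the `N`-orbit of a flag `Φ` onto the `N`-orbit of `s2 Φ`, and these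
two orbits are either disjoint or equal. If they are disjoint for some `Φ`, they are the required
bipartition. Otherwise `N` is transitive on `F`. The words `r0`, `r1 r0 r1`, `r2 r0 r2` and
`r2 r1 r0 r1 r2` of `Mon(Tr M)` preserve the second coordinate and act on `F × {1}` as the
generators of `N`, so for an automorphism `g` of `Tr(M)` the second coordinate of `g (Φ, 1)` does
not depend on `Φ`; as `r2` acts on `F × {1}` as `s2` but swaps the copies `0` and `2`, it is `1`.
Hence `Γ(Tr M) = {γ × id | γ ∈ Γ(M)}`, and `Tr(M)` has exactly `3k` flag orbits.
-/

open Equiv MulAction Subgroup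
open scoped Pointwise

section Map

variable {F : Type*} (s0 s1 s2 : Perm F)

def evenSubgroup : Subgroup (Perm F) := closure {s0, s1, s2 * s0 * s2, s2 * s1 * s2}

def HasFlagBipartition : Prop :=
  ∃ A B : Set F, A.Nonempty ∧ B.Nonempty ∧ A ∪ B = Set.univ ∧ A ∩ B = ∅ ∧
    ⇑s0 '' A = A ∧ ⇑s1 '' A = A ∧ ⇑s2 '' A = B

variable {s0 s1 s2}

theorem conj_mem_evenSubgroup (hs2 : s2 * s2 = 1) {n : Perm F} (hn : n ∈ evenSubgroup s0 s1 s2) :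
    s2 * n * s2 ∈ evenSubgroup s0 s1 s2 := by
  have hs2' : s2⁻¹ = s2 := inv_eq_of_mul_eq_one_right hs2
  suffices evenSubgroup s0 s1 s2 ≤ (evenSubgroup s0 s1 s2).comap (MulAut.conj s2).toMonoidHom by
    simpa [hs2'] using this hn
  refine closure_le _ |>.mpr ?_
  rintro t (rfl | rfl | rfl | rfl) <;> apply Subgroup.subset_closure <;>
    simp [hs2', ← mul_assoc, hs2, mul_assoc _ s2 s2]

theorem image_eq_of_mem_closure {S : Set (Perm F)} {A : Set F} (hS : ∀ s ∈ S, ⇑s '' A = A)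
    {g : Perm F} (hg : g ∈ closure S) : ⇑g '' A = A := by
  have : closure S ≤ stabilizer (Perm F) A :=
    closure_le _ |>.mpr fun s hs => by simpa [mem_stabilizer_iff, ← Set.image_smul] using hS s hs
  simpa [mem_stabilizer_iff, ← Set.image_smul] using this hg

theorem eq_univ_of_forall_image_eq {S : Set (Perm F)}
    (htrans : ∀ x y : F, ∃ g ∈ closure S, g x = y) {A : Set F} (hA : A.Nonempty)
    (hS : ∀ s ∈ S, ⇑s '' A = A) : A = Set.univ := by
  obtain ⟨x, hx⟩ := hA
  refine Set.eq_univ_of_forall fun y => ?_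
  obtain ⟨g, hg, rfl⟩ := htrans x y
  exact image_eq_of_mem_closure hS hg ▸ Set.mem_image_of_mem g hx

theorem image_orbit_evenSubgroup {n : Perm F} (hn : n ∈ evenSubgroup s0 s1 s2) (x : F) :
    ⇑n '' orbit (evenSubgroup s0 s1 s2) x = orbit (evenSubgroup s0 s1 s2) x := by
  simpa [← Set.image_smul] using smul_orbit (⟨n, hn⟩ : evenSubgroup s0 s1 s2) x

theorem image_orbit_evenSubgroup_eq_orbit_apply (hs2 : s2 * s2 = 1) (x : F) :
    ⇑s2 '' orbit (evenSubgroup s0 s1 s2) x = orbit (evenSubgroup s0 s1 s2) (s2 x) := by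
  have hs2x : ∀ y, s2 (s2 y) = y := fun y => by simpa using congr($hs2 y)
  ext z
  simp only [Set.mem_image, mem_orbit_iff, Subtype.exists, Subgroup.mk_smul, Perm.smul_def]
  constructor
  · rintro ⟨_, ⟨n, hn, rfl⟩, rfl⟩
    exact ⟨s2 * n * s2, conj_mem_evenSubgroup hs2 hn, by simp [hs2x]⟩
  · rintro ⟨n, hn, rfl⟩
    exact ⟨_, ⟨s2 * n * s2, conj_mem_evenSubgroup hs2 hn, rfl⟩, by simp [hs2x]⟩

theorem orbit_evenSubgroup_eq_univ (hs2 : s2 * s2 = 1)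
    (htrans : ∀ x y : F, ∃ g ∈ closure ({s0, s1, s2} : Set (Perm F)), g x = y) {x : F}
    (hx : s2 x ∈ orbit (evenSubgroup s0 s1 s2) x) : orbit (evenSubgroup s0 s1 s2) x = Set.univ := by
  refine eq_univ_of_forall_image_eq htrans ⟨x, mem_orbit_self x⟩ ?_
  rintro s (rfl | rfl | rfl)
  · exact image_orbit_evenSubgroup (Subgroup.subset_closure (by simp)) x
  · exact image_orbit_evenSubgroup (Subgroup.subset_closure (by simp)) x
  · rw [image_orbit_evenSubgroup_eq_orbit_apply hs2, orbit_eq_iff.mpr hx]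

theorem exists_bipartition_of_apply_notMem_orbit (hs2 : s2 * s2 = 1)
    (htrans : ∀ x y : F, ∃ g ∈ closure ({s0, s1, s2} : Set (Perm F)), g x = y) {x : F}
    (hx : s2 x ∉ orbit (evenSubgroup s0 s1 s2) x) :
    HasFlagBipartition s0 s1 s2 := by
  set N := evenSubgroup s0 s1 s2
  have hs0 : s0 ∈ N := Subgroup.subset_closure (by simp)
  have hs1 : s1 ∈ N := Subgroup.subset_closure (by simp)
  have hB := image_orbit_evenSubgroup_eq_orbit_apply hs2 x (s0 := s0) (s1 := s1)
  have hs2x : s2 (s2 x) = x := by simpa using congr($hs2 x)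
  refine ⟨orbit N x, orbit N (s2 x), ⟨x, mem_orbit_self x⟩, ⟨s2 x, mem_orbit_self _⟩, ?_, ?_,
    image_orbit_evenSubgroup hs0 x, image_orbit_evenSubgroup hs1 x, hB⟩
  · refine eq_univ_of_forall_image_eq htrans ⟨x, .inl (mem_orbit_self x)⟩ ?_
    rintro s (rfl | rfl | rfl) <;> rw [Set.image_union]
    · rw [image_orbit_evenSubgroup hs0, image_orbit_evenSubgroup hs0]
    · rw [image_orbit_evenSubgroup hs1, image_orbit_evenSubgroup hs1]
    · rw [hB, image_orbit_evenSubgroup_eq_orbit_apply hs2, Set.union_comm, hs2x]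
  · refine Set.disjoint_iff_inter_eq_empty.mp ((orbit.eq_or_disjoint x (s2 x)).resolve_left ?_)
    exact fun h => hx (h ▸ mem_orbit_self _)

theorem exists_bipartition_or_isPretransitive_evenSubgroup (hs2 : s2 * s2 = 1)
    (htrans : ∀ x y : F, ∃ g ∈ closure ({s0, s1, s2} : Set (Perm F)), g x = y) :
    HasFlagBipartition s0 s1 s2 ∨ IsPretransitive (evenSubgroup s0 s1 s2) F := by
  by_cases h : ∃ x, s2 x ∉ orbit (evenSubgroup s0 s1 s2) x
  · obtain ⟨x, hx⟩ := h
    exact .inl (exists_bipartition_of_apply_notMem_orbit hs2 htrans hx)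
  · push Not at h
    refine .inr ⟨fun x y => mem_orbit_iff.mp ?_⟩
    exact orbit_evenSubgroup_eq_univ hs2 htrans (h x) ▸ Set.mem_univ y

end Map

section Truncation

theorem apply_apply_of_mem_centralizer {α : Type*} {S : Set (Perm α)} {g s : Perm α}
    (hg : g ∈ centralizer S) (hs : s ∈ S) (x : α) : g (s x) = s (g x) := by
  simpa using congr($(mem_centralizer_iff.mp hg s hs) x).symm

variable {F : Type*}

structure IsTruncation (s0 s1 s2 : Perm F) (r0 r1 r2 : Perm (F × Fin 3)) : Prop where
  r0_apply : ∀ Φ : F, r0 (Φ, 0) = (s1 Φ, 0) ∧ r0 (Φ, 1) = (s0 Φ, 1) ∧ r0 (Φ, 2) = (s1 Φ, 2)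
  r1_apply : ∀ Φ : F, r1 (Φ, 0) = (s2 Φ, 0) ∧ r1 (Φ, 1) = (Φ, 2) ∧ r1 (Φ, 2) = (Φ, 1)
  r2_apply : ∀ Φ : F, r2 (Φ, 0) = (Φ, 2) ∧ r2 (Φ, 1) = (s2 Φ, 1) ∧ r2 (Φ, 2) = (Φ, 0)

theorem fst_apply_eq_of_mem_centralizer {X ι : Type*} {S : Set (Perm (X × ι))}
    {g s : Perm (X × ι)} {γ t : X → X} (hγ : ∀ x, g x = (γ x.1, x.2))
    (hg : g ∈ centralizer S) (hs : s ∈ S) {i : ι} (ht : ∀ Φ, s (Φ, i) = (t Φ, i)) (Φ : X) :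
    γ (t Φ) = t (γ Φ) := by
  simpa [hγ, ht] using apply_apply_of_mem_centralizer hg hs (Φ, i)

theorem card_orbitRel_quotient_of_eq_prodCongr {X ι : Type*} (Γ : Subgroup (Perm X))
    (Δ : Subgroup (Perm (X × ι)))
    (hdesc : ∀ g ∈ Δ, ∃ γ ∈ Γ, g = γ.prodCongr (Equiv.refl ι))
    (hlift : ∀ γ ∈ Γ, γ.prodCongr (Equiv.refl ι) ∈ Δ) :
    Nat.card (orbitRel.Quotient Δ (X × ι)) = Nat.card (orbitRel.Quotient Γ X) * Nat.card ι := by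
  have hrel : ∀ x y : X × ι, orbitRel Δ (X × ι) x y ↔ (orbitRel Γ X).prod ⊥ x y := by
    rintro ⟨a, i⟩ ⟨b, j⟩
    simp only [Setoid.prod_apply, Setoid.bot_def, orbitRel_apply, mem_orbit_iff, Subtype.exists,
      Subgroup.mk_smul, Perm.smul_def]
    constructor
    · rintro ⟨g, hg, hgb⟩
      obtain ⟨γ, hγ, rfl⟩ := hdesc g hg
      simp only [prodCongr_apply, Prod.map, coe_refl, id, Prod.mk.injEq] at hgb
      exact ⟨⟨γ, hγ, hgb.1⟩, hgb.2.symm⟩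
    · rintro ⟨⟨γ, hγ, rfl⟩, rfl⟩
      exact ⟨_, hlift γ hγ, rfl⟩
  calc Nat.card (orbitRel.Quotient Δ (X × ι))
      = Nat.card (Quotient ((orbitRel Γ X).prod ⊥)) :=
        Nat.card_congr (Quotient.congr (Equiv.refl _) hrel)
    _ = Nat.card (orbitRel.Quotient Γ X × Quotient (⊥ : Setoid ι)) :=
        Nat.card_congr (Setoid.prodQuotientEquiv _ _).symm
    _ = _ := by rw [Nat.card_prod, Nat.card_congr Setoid.quotientBotEquiv]

namespace IsTruncation

variable {s0 s1 s2 : Perm F} {r0 r1 r2 : Perm (F × Fin 3)}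

theorem exists_levelPreserving_lift (hT : IsTruncation s0 s1 s2 r0 r1 r2) {t : Perm F}
    (ht : t ∈ ({s0, s1, s2 * s0 * s2, s2 * s1 * s2} : Set (Perm F))) :
    ∃ w ∈ closure ({r0, r1, r2} : Set (Perm (F × Fin 3))),
      (∀ x, (w x).2 = x.2) ∧ ∀ Φ, w (Φ, 1) = (t Φ, 1) := by
  have h0 : r0 ∈ closure ({r0, r1, r2} : Set _) := Subgroup.subset_closure (by simp)
  have h1 : r1 ∈ closure ({r0, r1, r2} : Set _) := Subgroup.subset_closure (by simp)
  have h2 : r2 ∈ closure ({r0, r1, r2} : Set _) := Subgroup.subset_closure (by simp)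
  obtain ⟨hr0, hr1, hr2⟩ := hT
  rcases ht with rfl | rfl | rfl | rfl
  · exact ⟨r0, h0, by rintro ⟨Φ, i⟩; fin_cases i <;> simp [hr0], by simp [hr0]⟩
  · exact ⟨r1 * r0 * r1, mul_mem (mul_mem h1 h0) h1,
      by rintro ⟨Φ, i⟩; fin_cases i <;> simp [hr0, hr1], by simp [hr0, hr1]⟩
  · exact ⟨r2 * r0 * r2, mul_mem (mul_mem h2 h0) h2,
      by rintro ⟨Φ, i⟩; fin_cases i <;> simp [hr0, hr2], by simp [hr0, hr2]⟩
  · exact ⟨r2 * r1 * r0 * r1 * r2, mul_mem (mul_mem (mul_mem (mul_mem h2 h1) h0) h1) h2,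
      by rintro ⟨Φ, i⟩; fin_cases i <;> simp [hr0, hr1, hr2], by simp [hr0, hr1, hr2]⟩

theorem snd_apply_eq_of_mem_evenSubgroup (hT : IsTruncation s0 s1 s2 r0 r1 r2)
    {g : Perm (F × Fin 3)} (hg : g ∈ centralizer ({r0, r1, r2} : Set (Perm (F × Fin 3))))
    {n : Perm F} (hn : n ∈ evenSubgroup s0 s1 s2) (Φ : F) : (g (n Φ, 1)).2 = (g (Φ, 1)).2 := by
  rw [← centralizer_closure] at hg
  induction hn using Subgroup.closure_induction generalizing Φ with
  | mem t ht =>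
    obtain ⟨w, hw, hw_snd, hw_one⟩ := hT.exists_levelPreserving_lift ht
    rw [← hw_one, apply_apply_of_mem_centralizer hg hw, hw_snd]
  | one => rfl
  | mul a b _ _ iha ihb => exact (iha (b Φ)).trans (ihb Φ)
  | inv a _ ih => simpa using (ih (a⁻¹ Φ)).symm

theorem prodCongr_mem_centralizer (hT : IsTruncation s0 s1 s2 r0 r1 r2) {γ : Perm F}
    (hγ : γ ∈ centralizer ({s0, s1, s2} : Set (Perm F))) :
    γ.prodCongr (Equiv.refl (Fin 3)) ∈ centralizer ({r0, r1, r2} : Set (Perm (F × Fin 3))) := by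
  have h0 := apply_apply_of_mem_centralizer hγ (s := s0) (by simp)
  have h1 := apply_apply_of_mem_centralizer hγ (s := s1) (by simp)
  have h2 := apply_apply_of_mem_centralizer hγ (s := s2) (by simp)
  obtain ⟨hr0, hr1, hr2⟩ := hT
  refine mem_centralizer_iff.mpr ?_
  rintro s (rfl | rfl | rfl) <;> refine Equiv.ext fun ⟨Φ, i⟩ => ?_ <;>
    fin_cases i <;> simp [hr0, hr1, hr2, h0, h1, h2]

variable [IsPretransitive (evenSubgroup s0 s1 s2) F]

theorem snd_apply_eq_one (hT : IsTruncation s0 s1 s2 r0 r1 r2) {g : Perm (F × Fin 3)}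
    (hg : g ∈ centralizer ({r0, r1, r2} : Set (Perm (F × Fin 3)))) (Φ : F) :
    (g (Φ, 1)).2 = 1 := by
  obtain ⟨⟨n, hn⟩, hnΦ⟩ := exists_smul_eq (evenSubgroup s0 s1 s2) Φ (s2 Φ)
  have h := hT.snd_apply_eq_of_mem_evenSubgroup hg hn Φ
  rw [show n Φ = s2 Φ from hnΦ, ← (hT.r2_apply Φ).2.1,
    apply_apply_of_mem_centralizer hg (by simp)] at h
  generalize g (Φ, 1) = x at h
  obtain ⟨Ψ, i⟩ := x
  fin_cases i <;> simp_all [hT.r2_apply]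

theorem apply_eq_mk (hT : IsTruncation s0 s1 s2 r0 r1 r2) {g : Perm (F × Fin 3)}
    (hg : g ∈ centralizer ({r0, r1, r2} : Set (Perm (F × Fin 3)))) (Φ : F) (i : Fin 3) :
    g (Φ, i) = ((g (Φ, 1)).1, i) := by
  have h1 : g (Φ, 1) = ((g (Φ, 1)).1, 1) := Prod.ext rfl (hT.snd_apply_eq_one hg Φ)
  have h2 : g (Φ, 2) = ((g (Φ, 1)).1, 2) := by
    rw [← (hT.r1_apply Φ).2.1, apply_apply_of_mem_centralizer hg (by simp), h1,
      (hT.r1_apply _).2.1]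
  have h0 : g (Φ, 0) = ((g (Φ, 1)).1, 0) := by
    rw [← (hT.r2_apply Φ).2.2, apply_apply_of_mem_centralizer hg (by simp), h2,
      (hT.r2_apply _).2.2]
  fin_cases i
  exacts [h0, h1, h2]

theorem exists_eq_prodCongr (hT : IsTruncation s0 s1 s2 r0 r1 r2) {g : Perm (F × Fin 3)}
    (hg : g ∈ centralizer ({r0, r1, r2} : Set (Perm (F × Fin 3)))) :
    ∃ γ ∈ centralizer ({s0, s1, s2} : Set (Perm F)), g = γ.prodCongr (Equiv.refl (Fin 3)) := by
  have hg' := hT.apply_eq_mk hg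
  have hg_inv := hT.apply_eq_mk (inv_mem hg)
  let γ : Perm F :=
    { toFun := fun Φ => (g (Φ, 1)).1
      invFun := fun Φ => (g⁻¹ (Φ, 1)).1
      left_inv := fun Φ => by dsimp only; rw [← hg' Φ 1]; simp
      right_inv := fun Φ => by dsimp only; rw [← hg_inv Φ 1]; simp }
  have hγ : ∀ x, g x = (γ x.1, x.2) := fun x => hg' x.1 x.2
  refine ⟨γ, mem_centralizer_iff.mpr ?_, Equiv.ext hγ⟩
  rintro s (rfl | rfl | rfl) <;> refine Equiv.ext fun Φ => Eq.symm ?_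
  · exact fst_apply_eq_of_mem_centralizer hγ hg (s := r0) (by simp) (hT.r0_apply · |>.2.1) Φ
  · exact fst_apply_eq_of_mem_centralizer hγ hg (s := r0) (by simp) (hT.r0_apply · |>.1) Φ
  · exact fst_apply_eq_of_mem_centralizer hγ hg (s := r2) (by simp) (hT.r2_apply · |>.2.1) Φ

theorem card_orbitRel_quotient_centralizer (hT : IsTruncation s0 s1 s2 r0 r1 r2) :
    Nat.card (orbitRel.Quotient (centralizer ({r0, r1, r2} : Set (Perm (F × Fin 3)))) (F × Fin 3))
      = 3 * Nat.card (orbitRel.Quotient (centralizer ({s0, s1, s2} : Set (Perm F))) F) := by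
  rw [card_orbitRel_quotient_of_eq_prodCongr _ _ (fun _ => hT.exists_eq_prodCongr)
    (fun _ => hT.prodCongr_mem_centralizer), Nat.card_fin, mul_comm]

end IsTruncation

end Truncation

theorem truncation_T_compatible_general
    {F : Type*}
    (s0 s1 s2 : Equiv.Perm F)
    (hs2i : s2 * s2 = 1)
    (htrans : ∀ x y : F, ∃ g ∈ Subgroup.closure ({s0, s1, s2} : Set (Equiv.Perm F)), g x = y)
    (r0 r1 r2 : Equiv.Perm (F × Fin 3))
    (hr0 : ∀ Φ : F, r0 (Φ, 0) = (s1 Φ, 0) ∧ r0 (Φ, 1) = (s0 Φ, 1) ∧ r0 (Φ, 2) = (s1 Φ, 2))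
    (hr1 : ∀ Φ : F, r1 (Φ, 0) = (s2 Φ, 0) ∧ r1 (Φ, 1) = (Φ, 2) ∧ r1 (Φ, 2) = (Φ, 1))
    (hr2 : ∀ Φ : F, r2 (Φ, 0) = (Φ, 2) ∧ r2 (Φ, 1) = (s2 Φ, 1) ∧ r2 (Φ, 2) = (Φ, 0))
    (k : ℕ)
    (hk : Nat.card (MulAction.orbitRel.Quotient
      (↥(Subgroup.centralizer ({s0, s1, s2} : Set (Equiv.Perm F)))) F) = k)
    (hTr : Nat.card (MulAction.orbitRel.Quotient
      (↥(Subgroup.centralizer ({r0, r1, r2} : Set (Equiv.Perm (F × Fin 3))))) (F × Fin 3)) < 3 * k) :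
    ∃ A B : Set F, A.Nonempty ∧ B.Nonempty ∧ A ∪ B = Set.univ ∧ A ∩ B = ∅ ∧
      ⇑s0 '' A = A ∧ ⇑s1 '' A = A ∧ ⇑s2 '' A = B := by
  rcases exists_bipartition_or_isPretransitive_evenSubgroup hs2i htrans with h | hN
  · exact h
  · have := (IsTruncation.mk hr0 hr1 hr2).card_orbitRel_quotient_centralizer
    omega

/-- if M is a k-orbit map and Tr(M) has fewer than 3k flag orbits
(i.e. Tr(M) is a k-orbit or 3k/2-orbit map), then the flags of M admit a bipartition
(A, B) with s0(A) = A, s1(A) = A and s2(A) = B: the flag graph of M has a quotient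
isomorphic to the symmetry type graph 2_{01}. -/
theorem truncation_T_compatible
    {F : Type*} [Fintype F] [Nonempty F]
    (s0 s1 s2 : Equiv.Perm F)
    (hs0i : s0 * s0 = 1) (hs0f : ∀ x, s0 x ≠ x)
    (hs1i : s1 * s1 = 1) (hs1f : ∀ x, s1 x ≠ x)
    (hs2i : s2 * s2 = 1) (hs2f : ∀ x, s2 x ≠ x)
    (hcomm : s0 * s2 = s2 * s0)
    (hs02i : (s0 * s2) * (s0 * s2) = 1) (hs02f : ∀ x, (s0 * s2) x ≠ x)
    (htrans : ∀ x y : F, ∃ g ∈ Subgroup.closure ({s0, s1, s2} : Set (Equiv.Perm F)), g x = y)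
    (r0 r1 r2 : Equiv.Perm (F × Fin 3))
    (hr0 : ∀ Φ : F, r0 (Φ, 0) = (s1 Φ, 0) ∧ r0 (Φ, 1) = (s0 Φ, 1) ∧ r0 (Φ, 2) = (s1 Φ, 2))
    (hr1 : ∀ Φ : F, r1 (Φ, 0) = (s2 Φ, 0) ∧ r1 (Φ, 1) = (Φ, 2) ∧ r1 (Φ, 2) = (Φ, 1))
    (hr2 : ∀ Φ : F, r2 (Φ, 0) = (Φ, 2) ∧ r2 (Φ, 1) = (s2 Φ, 1) ∧ r2 (Φ, 2) = (Φ, 0))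
    (k : ℕ)
    (hk : Nat.card (MulAction.orbitRel.Quotient
      (↥(Subgroup.centralizer ({s0, s1, s2} : Set (Equiv.Perm F)))) F) = k)
    (hTr : Nat.card (MulAction.orbitRel.Quotient
      (↥(Subgroup.centralizer ({r0, r1, r2} : Set (Equiv.Perm (F × Fin 3))))) (F × Fin 3)) < 3 * k) :
    ∃ A B : Set F, A.Nonempty ∧ B.Nonempty ∧ A ∪ B = Set.univ ∧ A ∩ B = ∅ ∧
      ⇑s0 '' A = A ∧ ⇑s1 '' A = A ∧ ⇑s2 '' A = B :=
  truncation_T_compatible_general s0 s1 s2 hs2i htrans r0 r1 r2 hr0 hr1 hr2 k hk hTr
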